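/- arXiv:1305.0723 — 4 statements merged into one kernel-verified Lean document; each statement's English description precedes it below -/
import Mathlib

section
/- Let f be a homeomorphism of 𝕋² = ℝ²/ℤ² which is semiconjugate to a rigid rotation R_ρ of the circle, and let Ω ⊆ 𝕋² be an externally transitive f-invariant set. Then the semiconjugacy is unique modulo rotations on Ω: for any two semiconjugacies h₁, h₂ from f to R_ρ there exists a rigid rotation R of 𝕊¹ such that h₁|_Ω = (R∘h₂)|_Ω. -/
open Filter Topology Set

noncomputable section

/-- The circle `𝕊¹ = ℝ/ℤ`. -/
abbrev S1 : Type := AddCircle (1 : ℝ)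

section Generic
variable {α : Type*} [TopologicalSpace α]

/-- `U` is a connected component of the set `S`. -/
def IsCC (S U : Set α) : Prop := ∃ x ∈ S, U = connectedComponentIn S x

/-- `U` is a connected component of the complement of `E` which is unbounded above and
bounded below (with respect to the last, real, coordinate): the "upper end" `𝒰⁺(E)`. -/
def IsUpperEnd (E U : Set (α × ℝ)) : Prop :=
  IsCC Eᶜ U ∧ ¬ BddAbove (Prod.snd '' U) ∧ BddBelow (Prod.snd '' U)

/-- `U` is a connected component of the complement of `E` which is unbounded below and
bounded above: the "lower end" `𝒰⁻(E)`. -/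
def IsLowerEnd (E U : Set (α × ℝ)) : Prop :=
  IsCC Eᶜ U ∧ BddAbove (Prod.snd '' U) ∧ ¬ BddBelow (Prod.snd '' U)

/-- `𝒰⁺(E)`: the union of all upper ends of the complement of `E` (in the relevant
situations there is exactly one). -/
def Uplus (E : Set (α × ℝ)) : Set (α × ℝ) := {x | ∃ U, IsUpperEnd E U ∧ x ∈ U}

/-- `𝒰⁻(E)`: the union of all lower ends of the complement of `E`. -/
def Uminus (E : Set (α × ℝ)) : Set (α × ℝ) := {x | ∃ U, IsLowerEnd E U ∧ x ∈ U}

/-- An essential continuum in the annulus `α × ℝ`: a compact connected set whose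
complement contains an unbounded-above and an unbounded-below component. -/
def IsEssentialContinuum (E : Set (α × ℝ)) : Prop :=
  IsCompact E ∧ IsConnected E ∧ (∃ U, IsUpperEnd E U) ∧ (∃ U, IsLowerEnd E U)

/-- An essential annular continuum: an essential continuum whose complement is exactly
the union of the two unbounded components. -/
def IsEAC (A : Set (α × ℝ)) : Prop :=
  IsCompact A ∧ IsConnected A ∧ ∃ Up Um, IsUpperEnd A Up ∧ IsLowerEnd A Um ∧ Aᶜ = Up ∪ Um

/-- An essential circloid: an essential annular continuum which contains no strictly
smaller essential annular continuum. -/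
def IsCircloid (C : Set (α × ℝ)) : Prop := IsEAC C ∧ ∀ B, B ⊂ C → ¬ IsEAC B

/-- The (unique) circloid `C_A = cl 𝒰⁺(A) ∩ cl 𝒰⁻(A)` contained in a thin annular
continuum `A`. -/
def coreCircloid (A : Set (α × ℝ)) : Set (α × ℝ) := closure (Uplus A) ∩ closure (Uminus A)

end Generic

/-- The two-torus `𝕋² = ℝ²/ℤ²`. -/
abbrev T2 : Type := S1 × S1

/-- `h` is a semiconjugacy from `f` to the rigid rotation `x ↦ x + ρ` of `𝕊¹`:
a continuous surjection with `h ∘ f = R_ρ ∘ h`. -/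
def SemiConjToRot (h : T2 → S1) (f : T2 → T2) (ρ : S1) : Prop :=
  Continuous h ∧ Function.Surjective h ∧ ∀ x, h (f x) = h x + ρ

/-- `Ω` is externally transitive for `f`: for all `x, y ∈ Ω` and all neighbourhoods
`Ux` of `x` and `Uy` of `y` there is `n ∈ ℕ` with `fⁿ(Ux) ∩ Uy ≠ ∅`. -/
def ExtTransitive (f : T2 → T2) (Ω : Set T2) : Prop :=
  ∀ x ∈ Ω, ∀ y ∈ Ω, ∀ Ux ∈ nhds x, ∀ Uy ∈ nhds y, ∃ n : ℕ, ((f^[n] '' Ux) ∩ Uy).Nonempty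

/-- If `f : 𝕋² → 𝕋²` is a homeomorphism semiconjugate to a rigid
rotation `R_ρ` of `𝕊¹` and `Ω ⊆ 𝕋²` is an externally transitive `f`-invariant set, then
any two semiconjugacies from `f` to `R_ρ` agree on `Ω` up to post-composition with a
rigid rotation of `𝕊¹`. -/
theorem semiconj_unique_mod_rotations_on_ext_transitive
    (f : T2 ≃ₜ T2) (ρ : S1) (Ω : Set T2)
    (hinv : (⇑f) '' Ω = Ω) (htrans : ExtTransitive (⇑f) Ω)
    (h₁ h₂ : T2 → S1)
    (hh₁ : SemiConjToRot h₁ (⇑f) ρ) (hh₂ : SemiConjToRot h₂ (⇑f) ρ) :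
    ∃ α : S1, ∀ x ∈ Ω, h₁ x = α + h₂ x := by
  classical
  rcases Ω.eq_empty_or_nonempty with rfl | ⟨x₀, hx₀⟩
  · exact ⟨0, fun x hx => absurd hx (notMem_empty x)⟩
  set g : T2 → S1 := fun x => h₁ x - h₂ x with hg
  have hgc : Continuous g := hh₁.1.sub hh₂.1
  have hgf : ∀ x, g (f x) = g x := by
    intro x
    simp only [hg, hh₁.2.2 x, hh₂.2.2 x]
    abel
  have hgfn : ∀ (n : ℕ) (x), g (f^[n] x) = g x := by
    intro n
    induction n with
    | zero => simp
    | succ n ih =>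
      intro x
      rw [Function.iterate_succ_apply', hgf, ih]
  have key : ∀ x ∈ Ω, g x = g x₀ := by
    intro x hx
    by_contra hne
    obtain ⟨V, W, hV, hW, hxV, hxW, hVW⟩ := t2_separation hne
    obtain ⟨n, z, hz⟩ := htrans x hx x₀ hx₀ (g ⁻¹' V)
      (hV.preimage hgc |>.mem_nhds hxV) (g ⁻¹' W)
      (hW.preimage hgc |>.mem_nhds hxW)
    obtain ⟨⟨w, hwV, rfl⟩, hzW⟩ := hz
    have : g (f^[n] w) ∈ V := by rw [hgfn]; exact hwV
    exact hVW.le_bot ⟨this, hzW⟩ |>.elim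
  refine ⟨g x₀, fun x hx => ?_⟩
  have := key x hx
  simp only [hg, sub_eq_sub_iff_add_eq_add] at this ⊢
  rw [sub_add_eq_add_sub, eq_sub_iff_add_eq]
  exact this
end
end

section
/- Let f be a homeomorphism of 𝕋² = ℝ²/ℤ² which is semiconjugate to a rigid rotation R_ρ of 𝕊¹, and assume the non-wandering set Ω(f) is externally transitive. Then the semiconjugacy is unique modulo rotations: for any two semiconjugacies h₁, h₂ from f to R_ρ there exists a rigid rotation R of 𝕊¹ with h₁ = R∘h₂ on all of 𝕋². -/
open Filter Topology Set

noncomputable section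

/-- The non-wandering set `Ω(f)` of `f`. -/
def NonWanderingSet (f : T2 → T2) : Set T2 :=
  {x | ∀ U ∈ nhds x, ∃ n : ℕ, 1 ≤ n ∧ ((f^[n] '' U) ∩ U).Nonempty}

/-- If `f : 𝕋² → 𝕋²` is a homeomorphism semiconjugate to a rigid
rotation `R_ρ` of `𝕊¹` and the non-wandering set `Ω(f)` is externally transitive, then
the semiconjugacy is unique modulo rotations on all of `𝕋²`. -/
theorem semiconj_unique_mod_rotations
    (f : T2 ≃ₜ T2) (ρ : S1)
    (htrans : ExtTransitive (⇑f) (NonWanderingSet (⇑f)))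
    (h₁ h₂ : T2 → S1)
    (hh₁ : SemiConjToRot h₁ (⇑f) ρ) (hh₂ : SemiConjToRot h₂ (⇑f) ρ) :
    ∃ α : S1, ∀ x : T2, h₁ x = α + h₂ x := by
  obtain ⟨hc₁, -, hs₁⟩ := hh₁
  obtain ⟨hc₂, -, hs₂⟩ := hh₂
  set g : T2 → S1 := fun x => h₁ x - h₂ x with hg
  have hgc : Continuous g := hc₁.sub hc₂
  have hginv : ∀ x, g (f x) = g x := by
    intro x; simp only [hg, hs₁, hs₂]; abel
  have hgiter : ∀ n (x : T2), g (f^[n] x) = g x := by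
    intro n
    induction n with
    | zero => intro x; simp
    | succ n ih =>
        intro x
        rw [Function.iterate_succ_apply, ih (f x), hginv]
  -- every point has a nonwandering point with the same g-value
  have key : ∀ x : T2, ∃ p, p ∈ NonWanderingSet (⇑f) ∧ g p = g x := by
    intro x
    obtain ⟨p, hp⟩ := exists_clusterPt_of_compactSpace
      (Filter.map (fun n => (⇑f)^[n] x) Filter.atTop)
    have hp' : MapClusterPt p Filter.atTop (fun n => (⇑f)^[n] x) := hp
    have hfreq := mapClusterPt_iff_frequently.mp hp'
    refine ⟨p, ?_, ?_⟩
    · intro U hU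
      obtain ⟨n₁, -, hn₁⟩ := Filter.frequently_atTop.mp (hfreq U hU) 0
      obtain ⟨n₂, hn₂ge, hn₂⟩ := Filter.frequently_atTop.mp (hfreq U hU) (n₁ + 1)
      refine ⟨n₂ - n₁, by omega, (⇑f)^[n₂] x, ?_, hn₂⟩
      refine ⟨(⇑f)^[n₁] x, hn₁, ?_⟩
      rw [← Function.iterate_add_apply]
      congr 1; omega
    · -- g p = g x since g is constant on the orbit
      have hc : MapClusterPt (g p) Filter.atTop (g ∘ fun n => (⇑f)^[n] x) :=
        hp'.continuousAt_comp hgc.continuousAt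
      have : MapClusterPt (g p) Filter.atTop (fun _ : ℕ => g x) := by
        convert hc using 2 with n
        simp only [Function.comp_apply, hgiter]
      have h2 := mapClusterPt_iff_frequently.mp this
      by_contra hne
      obtain ⟨V, W, hVo, hWo, hpV, hxW, hVW⟩ := t2_separation hne
      have := (h2 V (hVo.mem_nhds hpV)).exists
      obtain ⟨-, hmem⟩ := this
      exact hVW.le_bot ⟨hmem, hxW⟩ |>.elim
  -- g is constant on the nonwandering set
  have hconst : ∀ p ∈ NonWanderingSet (⇑f), ∀ q ∈ NonWanderingSet (⇑f), g p = g q := by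
    intro p hp q hq
    by_contra hne
    obtain ⟨V, W, hVo, hWo, hpV, hqW, hVW⟩ := t2_separation hne
    obtain ⟨n, w, ⟨z, hz, rfl⟩, hw⟩ :=
      htrans p hp q hq (g ⁻¹' V) (hgc.continuousAt.preimage_mem_nhds (hVo.mem_nhds hpV))
        (g ⁻¹' W) (hgc.continuousAt.preimage_mem_nhds (hWo.mem_nhds hqW))
    have : g z ∈ W := by rwa [← hgiter n z]
    exact hVW.le_bot ⟨hz, this⟩ |>.elim
  refine ⟨g (0, 0), fun x => ?_⟩
  obtain ⟨p, hpΩ, hpg⟩ := key x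
  obtain ⟨p₀, hp₀Ω, hp₀g⟩ := key (0, 0)
  have : g x = g (0, 0) := by rw [← hpg, ← hp₀g]; exact hconst p hpΩ p₀ hp₀Ω
  have := this.symm
  calc h₁ x = (h₁ x - h₂ x) + h₂ x := by abel
    _ = g (0, 0) + h₂ x := by rw [show h₁ x - h₂ x = g x from rfl, ‹g x = g (0,0)›]
end
end

section
/- Suppose S ⊆ ℝ^d is a thin horizontal strip and K ⊆ S is a closed connected set that separates 𝒰⁺(S) and 𝒰⁻(S), i.e., 𝒰⁺(S) and 𝒰⁻(S) are contained in different connected components of ℝ^d ∖ K. Then the minimal strip C_S = cl(𝒰⁺(S)) ∩ cl(𝒰⁻(S)) is contained in K. -/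
open Filter Topology Set

noncomputable section

/-- `ℝ^d`, written as `(Fin k → ℝ) × ℝ` so that the last coordinate is the second
factor (here `k = d-1`). -/
abbrev Rd (k : ℕ) : Type := (Fin k → ℝ) × ℝ

/-- A horizontal strip in `ℝ^d`: a closed connected set `S` with bounded last-coordinate
projection whose complement consists exactly of one component unbounded above (bounded
below) and one component unbounded below (bounded above). -/
def IsHorizontalStrip {k : ℕ} (S : Set (Rd k)) : Prop :=
  IsClosed S ∧ IsConnected S ∧ Bornology.IsBounded (Prod.snd '' S) ∧
    ∃ Up Um, IsUpperEnd S Up ∧ IsLowerEnd S Um ∧ Sᶜ = Up ∪ Um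

/-- If `S ⊆ ℝ^d` is a thin horizontal strip and `K ⊆ S` is a closed
connected set separating `𝒰⁺(S)` from `𝒰⁻(S)`, then the minimal strip
`C_S = cl 𝒰⁺(S) ∩ cl 𝒰⁻(S)` is contained in `K`. -/
theorem core_strip_subset_of_separating {k : ℕ} (S : Set (Rd k))
    (hS : IsHorizontalStrip S) (hthin : interior S = ∅)
    (K : Set (Rd k)) (hKcl : IsClosed K) (hKconn : IsConnected K) (hKS : K ⊆ S)
    (hsep : ∀ x ∈ Uplus S, ∀ y ∈ Uminus S,
      connectedComponentIn Kᶜ x ≠ connectedComponentIn Kᶜ y) :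
    closure (Uplus S) ∩ closure (Uminus S) ⊆ K := by
  rintro x ⟨hxp, hxm⟩
  by_contra hxK
  have hxKc : x ∈ Kᶜ := hxK
  have hVopen : IsOpen (connectedComponentIn Kᶜ x) :=
    hKcl.isOpen_compl.connectedComponentIn
  have hxV : x ∈ connectedComponentIn Kᶜ x := mem_connectedComponentIn hxKc
  obtain ⟨p, hpV, hp⟩ := mem_closure_iff.mp hxp _ hVopen hxV
  obtain ⟨q, hqV, hq⟩ := mem_closure_iff.mp hxm _ hVopen hxV
  have h1 : connectedComponentIn Kᶜ x = connectedComponentIn Kᶜ p :=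
    connectedComponentIn_eq hpV
  have h2 : connectedComponentIn Kᶜ x = connectedComponentIn Kᶜ q :=
    connectedComponentIn_eq hqV
  exact hsep p hp q hq (h1 ▸ h2)
end
end

section
/- In the setting where ĥ : 𝔸 → ℝ is a lift of a semiconjugacy h (from a homeomorphism f of 𝕋² homotopic to the identity to an irrational rotation) all of whose fibres are essential annular continua of homotopy type (1,0), set A_ξ = ĥ⁻¹{ξ} and A⁻_ξ = ∂𝒰⁻(A_ξ), A⁺_ξ = ∂𝒰⁺(A_ξ), and let Ω = {ξ ∈ ℝ : A_ξ is thin}. Then the map ξ ↦ τ(A⁻_ξ) is lower semi-continuous от the left on Ω, i.e., liminf_{ξ'↗ξ} τ(A⁻_{ξ'}) ≥ τ(A⁻_ξ) for all ξ ∈ Ω; similarly ξ ↦ τ(A⁺_ξ) is lower semi-continuous from the right on Ω. -/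
open Filter Topology Set

noncomputable section

/-- The two-dimensional annulus `𝔸 = 𝕊¹ × ℝ`. -/
abbrev A2 : Type := S1 × ℝ
/-- The plane `ℝ²`. -/
abbrev R2 : Type := ℝ × ℝ
/-- The covering map `π : ℝ² → 𝔸`. -/
def projA : R2 → A2 := fun p => (((p.1 : ℝ) : S1), p.2)

/-- The covering map `π : ℝ² → 𝕋²`. -/
def projT : R2 → T2 := fun p => (((p.1 : ℝ) : S1), ((p.2 : ℝ) : S1))

/-- The vertical infinite cyclic cover `𝔸 → 𝕋²`, `(θ,t) ↦ (θ, t mod 1)`. -/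
def pV : A2 → T2 := fun p => (p.1, ((p.2 : ℝ) : S1))

/-- The `n`-th power of the deck transformation `T : (x,y) ↦ (x+1,y)` of `ℝ²` over `𝔸`. -/
def TZ (n : ℤ) : R2 → R2 := fun p => (p.1 + n, p.2)

/-- `G` is a compact generator of the (horizontal) annular continuum `A ⊆ 𝔸`:
`G` is compact, connected, contained in `Â = π⁻¹(A)` and `⋃_{n ∈ ℤ} Tⁿ(G) = Â`. -/
def IsCompactGenerator (A : Set A2) (G : Set R2) : Prop :=
  IsCompact G ∧ IsConnected G ∧ G ⊆ projA ⁻¹' A ∧ (⋃ n : ℤ, TZ n '' G) = projA ⁻¹' A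

/-- The annular continuum `A ⊆ 𝔸` is compactly generated. -/
def CompactlyGeneratedA (A : Set A2) : Prop := ∃ G, IsCompactGenerator A G

/-- `τ(A)`: the infimum of the diameters of compact generators of `A ⊆ 𝔸`
(`+∞` if there is none). -/
def tauA (A : Set A2) : ENNReal :=
  sInf ((fun G : Set R2 => EMetric.diam G) '' {G | IsCompactGenerator A G})

/-! ### Helper lemmas -/

lemma projA_continuous : Continuous projA :=
  ((continuous_quotient_mk'.comp continuous_fst).prodMk continuous_snd : _)

lemma projA_isOpenMap : IsOpenMap projA :=
  (QuotientAddGroup.isOpenMap_coe.prodMap IsOpenMap.id : _)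

/-- `TZ n` as a homeomorphism. -/
def TZH (n : ℤ) : R2 ≃ₜ R2 :=
  (Homeomorph.addRight (n : ℝ)).prodCongr (Homeomorph.refl ℝ)

lemma TZH_coe (n : ℤ) : ⇑(TZH n) = TZ n := rfl

lemma TZ_isometry (n : ℤ) : Isometry (TZ n) := by
  intro p q
  simp only [TZ, Prod.edist_eq, edist_add_right]

lemma projA_TZ (n : ℤ) (p : R2) : projA (TZ n p) = projA p := by
  unfold projA TZ
  refine Prod.ext ?_ rfl
  show ((p.1 + (n:ℝ) : ℝ) : S1) = ((p.1 : ℝ) : S1)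
  have : (((n:ℝ)) : S1) = 0 := by
    rw [AddCircle.coe_eq_zero_iff]
    exact ⟨n, by simp⟩
  rw [QuotientAddGroup.mk_add]
  show ((p.1 : ℝ) : S1) + (((n:ℝ)) : S1) = _
  rw [this, add_zero]

lemma TZ_preimage_projA (n : ℤ) (S : Set A2) :
    TZ n ⁻¹' (projA ⁻¹' S) = projA ⁻¹' S := by
  ext p; simp [Set.mem_preimage, projA_TZ]

lemma frontier_preimage_projA (S : Set A2) :
    projA ⁻¹' (frontier S) = frontier (projA ⁻¹' S) :=
  projA_isOpenMap.preimage_frontier_eq_frontier_preimage projA_continuous S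

lemma frontier_lt_subset {X : Type*} [TopologicalSpace X] {F : X → ℝ} (hF : Continuous F)
    (ζ : ℝ) : frontier {z | F z < ζ} ⊆ {z | F z = ζ} := by
  intro x hx
  have h1 : x ∈ closure {z | F z < ζ} := hx.1
  have h2 : F x ≤ ζ := by
    have := closure_minimal (fun z (hz : F z < ζ) => le_of_lt hz)
      (isClosed_le hF continuous_const) h1
    exact this
  have h3 : ¬ F x < ζ := by
    intro hlt
    exact hx.2 ((isOpen_lt hF continuous_const).subset_interior_iff.mpr subset_rfl hlt)
  exact le_antisymm h2 (not_lt.mp h3)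

lemma isCompactGenerator_TZ {A : Set A2} {G : Set R2} (k : ℤ)
    (hG : IsCompactGenerator A G) : IsCompactGenerator A (TZ k '' G) := by
  obtain ⟨hc, hconn, hsub, huni⟩ := hG
  refine ⟨hc.image (TZ_isometry k).continuous, hconn.image _ ((TZ_isometry k).continuous.continuousOn), ?_, ?_⟩
  · rintro x ⟨p, hp, rfl⟩
    simpa [projA_TZ] using hsub hp
  · rw [← huni]
    apply Set.Subset.antisymm
    · rintro x ⟨_, ⟨n, rfl⟩, q, ⟨p, hp, rfl⟩, rfl⟩
      refine Set.mem_iUnion.mpr ⟨n + k, ⟨p, hp, ?_⟩⟩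
      simp only [TZ, Prod.mk.injEq]
      exact ⟨by push_cast; ring, trivial⟩
    · rintro x ⟨_, ⟨n, rfl⟩, p, hp, rfl⟩
      refine Set.mem_iUnion.mpr ⟨n - k, ⟨TZ k p, ⟨p, hp, rfl⟩, ?_⟩⟩
      simp only [TZ, Prod.mk.injEq]
      exact ⟨by push_cast; ring, trivial⟩

lemma preconnected_inter_frontier {X : Type*} [TopologicalSpace X] {C U : Set X}
    (hC : IsPreconnected C) (h1 : (C ∩ U).Nonempty) (h2 : (C \ closure U).Nonempty)
    (hU : IsOpen U) : (C ∩ frontier U).Nonempty := by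
  by_contra h
  have hsub : C ⊆ U ∪ (closure U)ᶜ := by
    intro c hc
    rcases Classical.em (c ∈ closure U) with hcl | hcl
    · left
      by_contra hcU
      exact h ⟨c, hc, hcl, by rwa [hU.interior_eq]⟩
    · right; exact hcl
  have := hC U (closure U)ᶜ hU (isClosed_closure.isOpen_compl) hsub h1 h2
  obtain ⟨x, -, hxU, hxc⟩ := this
  exact hxc (subset_closure hxU)

lemma preconnected_of_hausdorffEdist_limit {X : Type*} [MetricSpace X] {G : Set X}
    (hGc : IsCompact G) {Gs : ℕ → Set X} (hconn : ∀ n, IsPreconnected (Gs n))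
    (hcv : ∀ ε : ℝ, 0 < ε →
      ∃ n, EMetric.hausdorffEdist (Gs n) G < ENNReal.ofReal ε) : IsPreconnected G := by
  by_contra hnc
  rw [IsPreconnected] at hnc
  push_neg at hnc
  obtain ⟨u, v, hu, hv, hcov, ⟨x₁, hx₁⟩, ⟨x₂, hx₂⟩, hempty⟩ := hnc
  have hemp : G ∩ (u ∩ v) = ∅ := hempty
  set G₁ : Set X := G \ v with hG₁
  set G₂ : Set X := G \ u with hG₂
  have hG₁c : IsCompact G₁ := hGc.diff hv
  have hG₂c : IsCompact G₂ := hGc.diff hu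
  have hdisj : Disjoint G₁ G₂ := by
    rw [Set.disjoint_iff]
    rintro z ⟨⟨hzG, hzv⟩, ⟨-, hzu⟩⟩
    rcases hcov hzG with h | h
    · exact hzu h
    · exact hzv h
  have hGsplit : G ⊆ G₁ ∪ G₂ := by
    intro z hz
    rcases Classical.em (z ∈ v) with h | h
    · right
      refine ⟨hz, fun hzu => ?_⟩
      have : z ∈ G ∩ (u ∩ v) := ⟨hz, hzu, h⟩
      rw [hemp] at this; exact this
    · left; exact ⟨hz, h⟩
  obtain ⟨δ, hδ, hthick⟩ := hdisj.exists_thickenings hG₁c hG₂c.isClosed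
  obtain ⟨n, hn⟩ := hcv δ hδ
  have hn' : EMetric.hausdorffEdist G (Gs n) < ENNReal.ofReal δ := by
    unfold EMetric.hausdorffEdist at hn ⊢
    rwa [EMetric.hausdorffEdist_comm]
  -- Gs n is covered by the two thickenings
  have hcov' : Gs n ⊆ Metric.thickening δ G₁ ∪ Metric.thickening δ G₂ := by
    intro y hy
    obtain ⟨x, hxG, hxy⟩ := EMetric.exists_edist_lt_of_hausdorffEdist_lt hy hn
    have hd : dist y x < δ := by rwa [edist_lt_ofReal] at hxy
    rcases hGsplit hxG with h | h
    · left; exact Metric.mem_thickening_iff.mpr ⟨x, h, hd⟩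
    · right; exact Metric.mem_thickening_iff.mpr ⟨x, h, hd⟩
  have hmem : ∀ x ∈ G, ∃ y ∈ Gs n, dist y x < δ := by
    intro x hx
    obtain ⟨y, hyGs, hxy⟩ := EMetric.exists_edist_lt_of_hausdorffEdist_lt hx hn'
    exact ⟨y, hyGs, by rw [dist_comm]; rwa [edist_lt_ofReal] at hxy⟩
  have hx₁G₁ : x₁ ∈ G₁ := ⟨hx₁.1, fun hv' => by
    have : x₁ ∈ G ∩ (u ∩ v) := ⟨hx₁.1, hx₁.2, hv'⟩
    rw [hemp] at this; exact this.elim⟩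
  have hx₂G₂ : x₂ ∈ G₂ := ⟨hx₂.1, fun hu' => by
    have : x₂ ∈ G ∩ (u ∩ v) := ⟨hx₂.1, hu', hx₂.2⟩
    rw [hemp] at this; exact this.elim⟩
  obtain ⟨y₁, hy₁Gs, hy₁⟩ := hmem x₁ hx₁.1
  obtain ⟨y₂, hy₂Gs, hy₂⟩ := hmem x₂ hx₂.1
  have hne₁ : (Gs n ∩ Metric.thickening δ G₁).Nonempty :=
    ⟨y₁, hy₁Gs, Metric.mem_thickening_iff.mpr ⟨x₁, hx₁G₁, hy₁⟩⟩
  have hne₂ : (Gs n ∩ Metric.thickening δ G₂).Nonempty :=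
    ⟨y₂, hy₂Gs, Metric.mem_thickening_iff.mpr ⟨x₂, hx₂G₂, hy₂⟩⟩
  have := hconn n (Metric.thickening δ G₁) (Metric.thickening δ G₂)
    Metric.isOpen_thickening Metric.isOpen_thickening hcov' hne₁ hne₂
  obtain ⟨z, -, hz₁, hz₂⟩ := this
  exact (hthick.le_bot ⟨hz₁, hz₂⟩).elim

section EndIdentification

variable {H : A2 → ℝ}

lemma htop' (hHtop : Filter.Tendsto H (Filter.comap Prod.snd Filter.atTop) Filter.atTop) :
    ∀ M : ℝ, ∃ b : ℝ, ∀ z : A2, b ≤ z.2 → M ≤ H z := by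
  intro M
  have h1 : H ⁻¹' (Ici M) ∈ Filter.comap Prod.snd Filter.atTop := hHtop (Ici_mem_atTop M)
  rw [Filter.mem_comap] at h1
  obtain ⟨s, hs, hsub⟩ := h1
  obtain ⟨b, hb⟩ := Filter.mem_atTop_sets.mp hs
  exact ⟨b, fun z hz => hsub (show z.2 ∈ s from hb _ hz)⟩

lemma hbot' (hHbot : Filter.Tendsto H (Filter.comap Prod.snd Filter.atBot) Filter.atBot) :
    ∀ M : ℝ, ∃ b : ℝ, ∀ z : A2, z.2 ≤ b → H z ≤ M := by
  intro M
  have h1 : H ⁻¹' (Iic M) ∈ Filter.comap Prod.snd Filter.atBot := hHbot (Iic_mem_atBot M)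
  rw [Filter.mem_comap] at h1
  obtain ⟨s, hs, hsub⟩ := h1
  obtain ⟨b, hb⟩ := Filter.mem_atBot_sets.mp hs
  exact ⟨b, fun z hz => hsub (show z.2 ∈ s from hb _ hz)⟩

/-- vertical properness of `H`. -/
lemma hprop_of_tendsto (hHtop : Filter.Tendsto H (Filter.comap Prod.snd Filter.atTop) Filter.atTop)
    (hHbot : Filter.Tendsto H (Filter.comap Prod.snd Filter.atBot) Filter.atBot) :
    ∀ a b : ℝ, ∃ m M : ℝ, ∀ z : A2, a ≤ H z → H z ≤ b → m ≤ z.2 ∧ z.2 ≤ M := by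
  intro a b
  obtain ⟨M₀, hM₀⟩ := htop' hHtop (b + 1)
  obtain ⟨m₀, hm₀⟩ := hbot' hHbot (a - 1)
  refine ⟨m₀, M₀, fun z h1 h2 => ⟨?_, ?_⟩⟩
  · by_contra hc
    have := hm₀ z (le_of_lt (not_le.mp hc))
    linarith
  · by_contra hc
    have := hM₀ z (le_of_lt (not_le.mp hc))
    linarith

lemma upperEnd_gt (hHc : Continuous H)
    (hHtop : Filter.Tendsto H (Filter.comap Prod.snd Filter.atTop) Filter.atTop)
    {ζ : ℝ} {U : Set A2} (hU : IsUpperEnd (H ⁻¹' {ζ}) U) :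
    ∀ z ∈ U, ζ < H z := by
  obtain ⟨⟨x, hx, hUeq⟩, hnb, hbb⟩ := hU
  have hconn : IsPreconnected U := by
    rw [hUeq]
    exact (isConnected_connectedComponentIn_iff.mpr hx).isPreconnected
  have hsub : U ⊆ (H ⁻¹' {ζ})ᶜ := hUeq ▸ connectedComponentIn_subset _ _
  -- there is a point with large H value
  obtain ⟨b, hb⟩ := htop' hHtop (ζ + 1)
  obtain ⟨z₀, hz₀U, hz₀⟩ : ∃ z₀ ∈ U, b < z₀.2 := by
    by_contra hc
    push_neg at hc
    exact hnb ⟨b, by rintro y ⟨z, hz, rfl⟩; exact hc z hz⟩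
  have hz₀H : ζ < H z₀ := by have := hb z₀ hz₀.le; linarith
  intro z hz
  by_contra hc
  have hzH : H z < ζ := lt_of_le_of_ne (not_lt.mp hc) (fun he => hsub hz he)
  have := hconn.intermediate_value hz hz₀U hHc.continuousOn
    (Set.mem_Icc.mpr ⟨hzH.le, hz₀H.le⟩)
  obtain ⟨w, hwU, hwH⟩ := this
  exact hsub hwU hwH

lemma lowerEnd_lt (hHc : Continuous H)
    (hHbot : Filter.Tendsto H (Filter.comap Prod.snd Filter.atBot) Filter.atBot)
    {ζ : ℝ} {U : Set A2} (hU : IsLowerEnd (H ⁻¹' {ζ}) U) :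
    ∀ z ∈ U, H z < ζ := by
  obtain ⟨⟨x, hx, hUeq⟩, hbb, hnb⟩ := hU
  have hconn : IsPreconnected U := by
    rw [hUeq]
    exact (isConnected_connectedComponentIn_iff.mpr hx).isPreconnected
  have hsub : U ⊆ (H ⁻¹' {ζ})ᶜ := hUeq ▸ connectedComponentIn_subset _ _
  obtain ⟨b, hb⟩ := hbot' hHbot (ζ - 1)
  obtain ⟨z₀, hz₀U, hz₀⟩ : ∃ z₀ ∈ U, z₀.2 < b := by
    by_contra hc
    push_neg at hc
    exact hnb ⟨b, by rintro y ⟨z, hz, rfl⟩; exact hc z hz⟩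
  have hz₀H : H z₀ < ζ := by have := hb z₀ hz₀.le; linarith
  intro z hz
  by_contra hc
  have hzH : ζ < H z := lt_of_le_of_ne (not_lt.mp hc) (fun he => hsub hz he.symm)
  have := hconn.intermediate_value hz₀U hz hHc.continuousOn
    (Set.mem_Icc.mpr ⟨hz₀H.le, hzH.le⟩)
  obtain ⟨w, hwU, hwH⟩ := this
  exact hsub hwU hwH

lemma uminus_uplus_eq (hHc : Continuous H)
    (hHtop : Filter.Tendsto H (Filter.comap Prod.snd Filter.atTop) Filter.atTop)
    (hHbot : Filter.Tendsto H (Filter.comap Prod.snd Filter.atBot) Filter.atBot)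
    {ζ : ℝ} (hEAC : IsEAC (H ⁻¹' {ζ})) :
    Uminus (H ⁻¹' {ζ}) = {z | H z < ζ} ∧ Uplus (H ⁻¹' {ζ}) = {z | ζ < H z} := by
  obtain ⟨-, -, Up, Um, hUp, hUm, hcompl⟩ := hEAC
  have hUp' : ∀ z ∈ Up, ζ < H z := upperEnd_gt hHc hHtop hUp
  have hUm' : ∀ z ∈ Um, H z < ζ := lowerEnd_lt hHc hHbot hUm
  constructor
  · ext z
    constructor
    · rintro ⟨W, hW, hzW⟩
      obtain ⟨⟨w, hw, hWeq⟩, hba, hnb⟩ := hW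
      have hw' : w ∈ Up ∪ Um := hcompl ▸ hw
      rcases hw' with h | h
      · exfalso
        obtain ⟨u, hu, hUpEq⟩ := hUp.1
        have : connectedComponentIn (H ⁻¹' {ζ})ᶜ u = connectedComponentIn (H ⁻¹' {ζ})ᶜ w :=
          connectedComponentIn_eq (hUpEq ▸ h)
        have hWUp : W = Up := by rw [hWeq, ← this, ← hUpEq]
        rw [hWUp] at hba
        exact hUp.2.1 hba
      · obtain ⟨u, hu, hUmEq⟩ := hUm.1
        have : connectedComponentIn (H ⁻¹' {ζ})ᶜ u = connectedComponentIn (H ⁻¹' {ζ})ᶜ w :=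
          connectedComponentIn_eq (hUmEq ▸ h)
        have hWUm : W = Um := by rw [hWeq, ← this, ← hUmEq]
        exact hUm' z (hWUm ▸ hzW)
    · intro hz
      have hz' : z ∈ Up ∪ Um := by
        rw [← hcompl]
        exact fun he => absurd he (ne_of_lt hz)
      rcases hz' with h | h
      · exact absurd (hUp' z h) (by simp only [Set.mem_setOf_eq] at hz; linarith)
      · exact ⟨Um, hUm, h⟩
  · ext z
    constructor
    · rintro ⟨W, hW, hzW⟩
      obtain ⟨⟨w, hw, hWeq⟩, hnb, hbb⟩ := hW
      have hw' : w ∈ Up ∪ Um := hcompl ▸ hw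
      rcases hw' with h | h
      · obtain ⟨u, hu, hUpEq⟩ := hUp.1
        have : connectedComponentIn (H ⁻¹' {ζ})ᶜ u = connectedComponentIn (H ⁻¹' {ζ})ᶜ w :=
          connectedComponentIn_eq (hUpEq ▸ h)
        have hWUp : W = Up := by rw [hWeq, ← this, ← hUpEq]
        exact hUp' z (hWUp ▸ hzW)
      · exfalso
        obtain ⟨u, hu, hUmEq⟩ := hUm.1
        have : connectedComponentIn (H ⁻¹' {ζ})ᶜ u = connectedComponentIn (H ⁻¹' {ζ})ᶜ w :=
          connectedComponentIn_eq (hUmEq ▸ h)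
        have hWUm : W = Um := by rw [hWeq, ← this, ← hUmEq]
        rw [hWUm] at hnb
        exact hnb hUm.2.1
    · intro hz
      have hz' : z ∈ Up ∪ Um := by
        rw [← hcompl]
        exact fun he => absurd he (ne_of_gt hz)
      rcases hz' with h | h
      · exact ⟨Up, hUp, h⟩
      · exact absurd (hUm' z h) (by simp only [Set.mem_setOf_eq] at hz; linarith)

end EndIdentification

lemma TZ_image_preimage (k : ℤ) (S : Set A2) :
    TZ k '' (projA ⁻¹' S) = projA ⁻¹' S := by
  apply Set.Subset.antisymm
  · rintro x ⟨p, hp, rfl⟩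
    simpa [Set.mem_preimage, projA_TZ] using hp
  · intro x hx
    refine ⟨TZ (-k) x, by simpa [Set.mem_preimage, projA_TZ] using hx, ?_⟩
    simp only [TZ]
    have h : x.1 + ((-k : ℤ) : ℝ) + ((k : ℤ) : ℝ) = x.1 := by push_cast; ring
    rw [h]

lemma tau_master (H : A2 → ℝ) (hHc : Continuous H)
    (hprop : ∀ a b : ℝ, ∃ m M : ℝ, ∀ z : A2, a ≤ H z → H z ≤ b → m ≤ z.2 ∧ z.2 ≤ M)
    (ξ : ℝ) :
    tauA (frontier {z : A2 | H z < ξ}) ≤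
      Filter.liminf (fun ξ' : ℝ => tauA (frontier {z : A2 | H z < ξ'}))
        (nhdsWithin ξ (Set.Iio ξ)) := by
  by_contra hlt
  push_neg at hlt
  obtain ⟨b, hb1, hb2⟩ := exists_between hlt
  have hbtop : b < ⊤ := lt_of_lt_of_le hb2 le_top
  have hbne : b ≠ ⊤ := hbtop.ne
  -- frequently small tau, within (ξ-1, ξ)
  have hfreq : ∃ᶠ ξ' in nhdsWithin ξ (Set.Iio ξ),
      tauA (frontier {z : A2 | H z < ξ'}) < b :=
    frequently_lt_of_liminf_lt (by isBoundedDefault) hb1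
  have hIoo : Set.Ioo (ξ-1) ξ ∈ nhdsWithin ξ (Set.Iio ξ) :=
    Ioo_mem_nhdsLT (by linarith)
  have hfreq2 : ∃ᶠ ξ' in nhdsWithin ξ (Set.Iio ξ),
      (tauA (frontier {z : A2 | H z < ξ'}) < b ∧ ξ' ∈ Set.Ioo (ξ-1) ξ) :=
    hfreq.and_eventually (eventually_of_mem hIoo (fun x hx => hx))
  obtain ⟨u, hutend, hu⟩ := exists_seq_forall_of_frequently hfreq2
  have hunlt : ∀ n, u n < ξ := fun n => (hu n).2.2
  have hunIoo : ∀ n, ξ - 1 < u n := fun n => (hu n).2.1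
  -- extract generators with small diameter
  have hgen : ∀ n, ∃ G : Set R2,
      IsCompactGenerator (frontier {z : A2 | H z < u n}) G ∧ EMetric.diam G < b := by
    intro n
    have h := (hu n).1
    rw [tauA] at h
    obtain ⟨d, hd, hdb⟩ := sInf_lt_iff.mp h
    obtain ⟨G, hG, rfl⟩ := hd
    exact ⟨G, hG, hdb⟩
  choose G₀ hG₀ hG₀d using hgen
  have hne : ∀ n, (G₀ n).Nonempty := fun n => (hG₀ n).2.1.nonempty
  choose g hg using hne
  -- normalize horizontally
  set Gn : ℕ → Set R2 := fun n => TZ (-⌊(g n).1⌋) '' (G₀ n) with hGndef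
  have hGn : ∀ n, IsCompactGenerator (frontier {z : A2 | H z < u n}) (Gn n) :=
    fun n => isCompactGenerator_TZ _ (hG₀ n)
  have hGnd : ∀ n, EMetric.diam (Gn n) < b := by
    intro n
    rw [hGndef]
    unfold EMetric.diam
    rw [(TZ_isometry (-⌊(g n).1⌋)).ediam_image]
    exact hG₀d n
  set g' : ℕ → R2 := fun n => TZ (-⌊(g n).1⌋) (g n) with hg'def
  have hg'mem : ∀ n, g' n ∈ Gn n := fun n => ⟨g n, hg n, rfl⟩
  have hg'1 : ∀ n, 0 ≤ (g' n).1 ∧ (g' n).1 < 1 := by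
    intro n
    have : (g' n).1 = Int.fract (g n).1 := by
      simp only [hg'def, TZ, Int.fract]
      push_cast
      ring
    rw [this]
    exact ⟨Int.fract_nonneg _, Int.fract_lt_one _⟩
  -- the lifted map
  set HH : R2 → ℝ := fun p => H (projA p) with hHHdef
  have hHHc : Continuous HH := hHc.comp projA_continuous
  have hpre : ∀ ζ : ℝ,
      projA ⁻¹' (frontier {z : A2 | H z < ζ}) = frontier {p : R2 | HH p < ζ} := by
    intro ζ
    rw [frontier_preimage_projA]
    rfl
  have hfr : ∀ ζ : ℝ, frontier {p : R2 | HH p < ζ} ⊆ {p : R2 | HH p = ζ} :=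
    fun ζ => frontier_lt_subset hHHc ζ
  have hGnsub : ∀ n, Gn n ⊆ frontier {p : R2 | HH p < u n} := by
    intro n
    rw [← hpre]
    exact (hGn n).2.2.1
  have hGnH : ∀ n, ∀ p ∈ Gn n, HH p = u n := fun n p hp => hfr _ (hGnsub n hp)
  have hGnunion : ∀ n, (⋃ k : ℤ, TZ k '' (Gn n)) = frontier {p : R2 | HH p < u n} := by
    intro n
    rw [← hpre]
    exact (hGn n).2.2.2
  -- compact region containing all the Gn
  obtain ⟨m, M, hmM⟩ := hprop (ξ-1) ξ
  set R : ℝ := b.toReal with hRdef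
  have hR0 : 0 ≤ R := ENNReal.toReal_nonneg
  set K : Set R2 := Set.Icc (-R) (1+R) ×ˢ Set.Icc m M with hKdef
  have hKc : IsCompact K := isCompact_Icc.prod isCompact_Icc
  have hsnd : ∀ n, ∀ p ∈ Gn n, m ≤ p.2 ∧ p.2 ≤ M := by
    intro n p hp
    have h1 : H (projA p) = u n := hGnH n p hp
    have := hmM (projA p) (by rw [h1]; linarith [hunIoo n]) (by rw [h1]; linarith [hunlt n])
    exact this
  have hdist1 : ∀ n, ∀ p ∈ Gn n, dist p (g' n) ≤ R := by
    intro n p hp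
    have h1 : edist p (g' n) ≤ EMetric.diam (Gn n) :=
      EMetric.edist_le_diam_of_mem hp (hg'mem n)
    have h2 : edist p (g' n) ≤ b := h1.trans (hGnd n).le
    rw [dist_edist]
    exact ENNReal.toReal_mono hbne h2
  have hGnK : ∀ n, Gn n ⊆ K := by
    intro n p hp
    refine ⟨?_, hsnd n p hp⟩
    have h1 : dist p.1 (g' n).1 ≤ dist p (g' n) := by
      rw [Prod.dist_eq]
      exact le_max_left _ _
    have h2 : |p.1 - (g' n).1| ≤ R := by
      rw [← Real.dist_eq]
      exact h1.trans (hdist1 n p hp)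
    have h3 := abs_le.mp h2
    obtain ⟨h4, h5⟩ := hg'1 n
    exact Set.mem_Icc.mpr ⟨by linarith [h3.1], by linarith [h3.2]⟩
  -- pass to the compact space K
  haveI : CompactSpace K := isCompact_iff_compactSpace.mp hKc
  have hCc : ∀ n, IsCompact ((Subtype.val : K → R2) ⁻¹' (Gn n)) := fun n =>
    (IsClosed.preimage continuous_subtype_val (hGn n).1.isClosed).isCompact
  set C : ℕ → TopologicalSpace.NonemptyCompacts K := fun n =>
    ⟨⟨(Subtype.val : K → R2) ⁻¹' (Gn n), hCc n⟩,
      ⟨⟨g' n, hGnK n (hg'mem n)⟩, hg'mem n⟩⟩ with hCdef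
  have hCval : ∀ n, (Subtype.val : K → R2) '' ((C n) : Set K) = Gn n := by
    intro n
    show (Subtype.val : K → R2) '' ((Subtype.val : K → R2) ⁻¹' (Gn n)) = Gn n
    rw [Subtype.image_preimage_coe]
    exact Set.inter_eq_self_of_subset_right (hGnK n)
  obtain ⟨L, -, φ, hφ, hLtend⟩ := isCompact_univ.tendsto_subseq (fun n => Set.mem_univ (C n))
  set Glim : Set R2 := (Subtype.val : K → R2) '' (L : Set K) with hGlimdef
  have hGlimc : IsCompact Glim := L.isCompact.image continuous_subtype_val
  have hGlimne : Glim.Nonempty := L.nonempty.image _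
  -- Hausdorff convergence in the ambient space
  have hHD : ∀ ε : ENNReal, 0 < ε → ∀ᶠ n in Filter.atTop,
      EMetric.hausdorffEdist (Gn (φ n)) Glim < ε := by
    intro ε hε
    have h1 := EMetric.tendsto_nhds.mp hLtend ε hε
    refine h1.mono (fun n hn => ?_)
    have h2 : EMetric.hausdorffEdist ((C (φ n)) : Set K) (L : Set K) < ε := hn
    have h3 : EMetric.hausdorffEdist
        ((Subtype.val : K → R2) '' ((C (φ n)) : Set K))
        ((Subtype.val : K → R2) '' (L : Set K)) < ε := by
      unfold EMetric.hausdorffEdist at h2 ⊢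
      rwa [EMetric.hausdorffEdist_image isometry_subtype_coe]
    rwa [hCval] at h3
  -- the subsequence of parameters
  have huntend : Filter.Tendsto (fun n => u (φ n)) Filter.atTop (nhds ξ) :=
    (hutend.comp hφ.tendsto_atTop).mono_right nhdsWithin_le_nhds
  -- (A) Glim is contained in the frontier at level ξ
  have hGlimsub : Glim ⊆ frontier {p : R2 | HH p < ξ} := by
    intro x hx
    constructor
    · rw [Metric.mem_closure_iff]
      intro ε hε
      obtain ⟨n, hn⟩ := (hHD (ENNReal.ofReal (ε/2)) (ENNReal.ofReal_pos.mpr (by linarith))).exists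
      obtain ⟨y, hyG, hxy⟩ := EMetric.exists_edist_lt_of_hausdorffEdist_lt hx
        (by unfold EMetric.hausdorffEdist at hn; rwa [EMetric.hausdorffEdist_comm] at hn)
      have hxy' : dist x y < ε/2 := by rwa [edist_lt_ofReal] at hxy
      have hycl : y ∈ closure {p : R2 | HH p < u (φ n)} := (hGnsub (φ n) hyG).1
      obtain ⟨w, hw, hyw⟩ := Metric.mem_closure_iff.mp hycl (ε/2) (by linarith)
      refine ⟨w, show HH w < ξ from lt_trans hw (hunlt (φ n)), ?_⟩
      calc dist x w ≤ dist x y + dist y w := dist_triangle _ _ _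
        _ < ε := by linarith
    · intro hxint
      have hxlt : x ∈ {p : R2 | HH p < ξ} := interior_subset hxint
      rw [Set.mem_setOf_eq] at hxlt
      set mid : ℝ := (HH x + ξ)/2 with hmiddef
      have hmid1 : HH x < mid := by rw [hmiddef]; linarith
      have hmid2 : mid < ξ := by rw [hmiddef]; linarith
      have hopen : IsOpen {w : R2 | HH w < mid} := isOpen_lt hHHc continuous_const
      obtain ⟨ε, hε, hball⟩ := Metric.isOpen_iff.mp hopen x hmid1
      have hev1 : ∀ᶠ n in Filter.atTop, mid < u (φ n) :=
        huntend.eventually (eventually_gt_nhds hmid2)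
      have hev2 := hHD (ENNReal.ofReal ε) (ENNReal.ofReal_pos.mpr hε)
      obtain ⟨n, h1, h2⟩ := (hev1.and hev2).exists
      obtain ⟨y, hyG, hxy⟩ := EMetric.exists_edist_lt_of_hausdorffEdist_lt hx
        (by unfold EMetric.hausdorffEdist at h2; rwa [EMetric.hausdorffEdist_comm] at h2)
      have hy1 : HH y = u (φ n) := hGnH (φ n) y hyG
      have hy2 : HH y < mid := hball (by rw [Metric.mem_ball, dist_comm]; rwa [edist_lt_ofReal] at hxy)
      rw [hy1] at hy2
      linarith
  -- (B1) forward inclusion of the union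
  have hsub_union : (⋃ k : ℤ, TZ k '' Glim) ⊆ frontier {p : R2 | HH p < ξ} := by
    rintro x ⟨_, ⟨k, rfl⟩, p, hp, rfl⟩
    have h1 : TZ k p ∈ TZ k '' (projA ⁻¹' (frontier {z : A2 | H z < ξ})) :=
      ⟨p, by rw [hpre]; exact hGlimsub hp, rfl⟩
    rw [TZ_image_preimage, hpre] at h1
    exact h1
  -- (B2) reverse inclusion
  have hsup_union : frontier {p : R2 | HH p < ξ} ⊆ ⋃ k : ℤ, TZ k '' Glim := by
    intro z hz
    have hzH : HH z = ξ := hfr ξ hz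
    set kmin : ℤ := ⌈z.1 - 2 - R⌉ with hkmin
    set kmax : ℤ := ⌊z.1 + 1 + R⌋ with hkmax
    set S : Set R2 := ⋃ k ∈ Set.Icc kmin kmax, TZ k '' Glim with hSdef
    have hSclosed : IsClosed S := (Set.finite_Icc kmin kmax).isClosed_biUnion
      (fun k _ => ((hGlimc.image (TZ_isometry k).continuous)).isClosed)
    have hzS : z ∈ S := by
      rw [← hSclosed.closure_eq, Metric.mem_closure_iff]
      intro ε₀ hε₀
      set ε : ℝ := min ε₀ 1 with hεdef
      have hε : 0 < ε := lt_min hε₀ one_pos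
      have hεle : ε ≤ ε₀ := min_le_left _ _
      have hε1 : ε ≤ 1 := min_le_right _ _
      obtain ⟨w, hwH, hzw⟩ := Metric.mem_closure_iff.mp hz.1 (ε/6) (by linarith)
      have hev1 : ∀ᶠ n in Filter.atTop, HH w < u (φ n) :=
        huntend.eventually (eventually_gt_nhds hwH)
      have hev2 := hHD (ENNReal.ofReal (ε/6)) (ENNReal.ofReal_pos.mpr (by linarith))
      obtain ⟨n, h1, h2⟩ := (hev1.and hev2).exists
      have hballconn : IsPreconnected (Metric.ball z (ε/3)) :=
        (convex_ball z (ε/3)).isPreconnected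
      have hmeet1 : (Metric.ball z (ε/3) ∩ {p : R2 | HH p < u (φ n)}).Nonempty :=
        ⟨w, by rw [Metric.mem_ball, dist_comm]; linarith, h1⟩
      have hmeet2 : (Metric.ball z (ε/3) \ closure {p : R2 | HH p < u (φ n)}).Nonempty := by
        refine ⟨z, Metric.mem_ball_self (by linarith), fun hc => ?_⟩
        have : HH z ≤ u (φ n) := closure_minimal (fun q (hq : HH q < u (φ n)) => hq.le)
          (isClosed_le hHHc continuous_const) hc
        rw [hzH] at this
        linarith [hunlt (φ n)]
      obtain ⟨q, hqball, hqfr⟩ := preconnected_inter_frontier hballconn hmeet1 hmeet2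
        (isOpen_lt hHHc continuous_const)
      have hq' : q ∈ ⋃ k : ℤ, TZ k '' (Gn (φ n)) := by rw [hGnunion (φ n)]; exact hqfr
      obtain ⟨_, ⟨k, rfl⟩, p, hpG, hqeq⟩ := hq'
      have hp1 : p.1 ∈ Set.Icc (-R) (1+R) := (hGnK (φ n) hpG).1
      have hq1 : q.1 = p.1 + (k : ℝ) := by rw [← hqeq]; rfl
      have hdzq : dist z q < ε/3 := by rw [Metric.mem_ball, dist_comm] at hqball; exact hqball
      have hzq1 : |z.1 - q.1| ≤ dist z q := by
        rw [← Real.dist_eq, Prod.dist_eq]; exact le_max_left _ _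
      have habs := abs_le.mp (hzq1.trans hdzq.le)
      have hq1le : q.1 ≤ z.1 + 1 := by have := habs.1; linarith
      have hq1ge : z.1 - 1 ≤ q.1 := by have := habs.2; linarith
      have hkmem : k ∈ Set.Icc kmin kmax := by
        constructor
        · rw [hkmin]
          rw [Int.ceil_le]
          have := hp1.2
          have : (k:ℝ) = q.1 - p.1 := by rw [hq1]; ring
          rw [this]
          have := hp1.2
          linarith
        · rw [hkmax]
          rw [Int.le_floor]
          have : (k:ℝ) = q.1 - p.1 := by rw [hq1]; ring
          rw [this]
          have := hp1.1
          linarith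
      obtain ⟨p', hp'G, hpp'⟩ := EMetric.exists_edist_lt_of_hausdorffEdist_lt hpG h2
      have hpp'' : dist p p' < ε/6 := by rwa [edist_lt_ofReal] at hpp'
      refine ⟨TZ k p', Set.mem_biUnion hkmem ⟨p', hp'G, rfl⟩, ?_⟩
      have hqt : dist q (TZ k p') = dist p p' := by
        rw [← hqeq]
        exact (TZ_isometry k).dist_eq p p'
      calc dist z (TZ k p') ≤ dist z q + dist q (TZ k p') := dist_triangle _ _ _
        _ < ε/3 + ε/6 := by rw [hqt]; linarith
        _ ≤ ε := by linarith
        _ ≤ ε₀ := hεle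
    obtain ⟨k, hk, hmem⟩ := Set.mem_iUnion₂.mp hzS
    exact Set.mem_iUnion.mpr ⟨k, hmem⟩
  -- (C) connectedness of the limit
  have hGlimconn : IsPreconnected Glim := by
    refine preconnected_of_hausdorffEdist_limit hGlimc
      (fun n => (hGn (φ n)).2.1.isPreconnected) (fun ε hε => ?_)
    exact (hHD (ENNReal.ofReal ε) (ENNReal.ofReal_pos.mpr hε)).exists
  -- (D) diameter bound
  have hdiam : EMetric.diam Glim ≤ b := by
    refine EMetric.diam_le (fun x hx y hy => ?_)
    refine ENNReal.le_of_forall_pos_le_add (fun ε hε hblt => ?_)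
    have hδ : (0:ENNReal) < (ε:ENNReal)/2 := by
      simp only [ENNReal.div_pos_iff]
      exact ⟨by exact_mod_cast hε.ne', ENNReal.ofNat_ne_top⟩
    obtain ⟨n, hn⟩ := (hHD ((ε:ENNReal)/2) hδ).exists
    have hn' : EMetric.hausdorffEdist Glim (Gn (φ n)) < (ε:ENNReal)/2 := by
      unfold EMetric.hausdorffEdist at hn ⊢
      rwa [EMetric.hausdorffEdist_comm] at hn
    obtain ⟨x', hx'G, hxx'⟩ := EMetric.exists_edist_lt_of_hausdorffEdist_lt hx hn'
    obtain ⟨y', hy'G, hyy'⟩ := EMetric.exists_edist_lt_of_hausdorffEdist_lt hy hn'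
    have hxy' : edist x' y' ≤ b := (EMetric.edist_le_diam_of_mem hx'G hy'G).trans (hGnd (φ n)).le
    calc edist x y ≤ edist x x' + edist x' y' + edist y' y := edist_triangle4 _ _ _ _
      _ ≤ (ε:ENNReal)/2 + b + (ε:ENNReal)/2 := by
          refine add_le_add (add_le_add hxx'.le hxy') ?_
          rw [edist_comm]
          exact hyy'.le
      _ = b + ε := by rw [add_comm _ b, add_assoc, ENNReal.add_halves]
  -- assemble the generator
  have hGgen : IsCompactGenerator (frontier {z : A2 | H z < ξ}) Glim := by
    refine ⟨hGlimc, ⟨hGlimne, hGlimconn⟩, ?_, ?_⟩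
    · rw [hpre]; exact hGlimsub
    · rw [hpre]; exact Set.Subset.antisymm hsub_union hsup_union
  have htau : tauA (frontier {z : A2 | H z < ξ}) ≤ b := by
    refine le_trans (sInf_le ?_) hdiam
    exact ⟨Glim, hGgen, rfl⟩
  exact lt_irrefl _ (lt_of_le_of_lt htau hb2)

lemma liminf_comp_map {α β : Type*} (F : β → ENNReal) (m : α → β) (l : Filter α) :
    Filter.liminf F (Filter.map m l) = Filter.liminf (fun a => F (m a)) l := by
  rw [Filter.liminf, Filter.liminf, Filter.map_map]
  rfl

lemma map_neg_nhdsWithin_Ioi (ξ : ℝ) :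
    Filter.map (fun x : ℝ => -x) (nhdsWithin ξ (Set.Ioi ξ)) =
      nhdsWithin (-ξ) (Set.Iio (-ξ)) := by
  have h := (Homeomorph.neg ℝ).isEmbedding.map_nhdsWithin_eq (Set.Ioi ξ) ξ
  simp only [Homeomorph.coe_neg] at h
  rw [Set.image_neg_Ioi] at h
  exact h

/-- In the setting of a lift `H : 𝔸 → ℝ` of a semiconjugacy `h` (from a
homeomorphism of `𝕋²` homotopic to the identity to an irrational rotation) whose fibres
are essential annular continua of homotopy type `(1,0)`, with `A_ξ = H⁻¹{ξ}`,
`A⁻_ξ = ∂𝒰⁻(A_ξ)`, `A⁺_ξ = ∂𝒰⁺(A_ξ)` and `Ω = {ξ | A_ξ thin}`: the map `ξ ↦ τ(A⁻_ξ)` is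
lower semi-continuous from the left on `Ω`, and `ξ ↦ τ(A⁺_ξ)` is lower semi-continuous
from the right on `Ω`. -/
theorem tau_lower_semicontinuous
    (f : T2 ≃ₜ T2)
    (hf : ContinuousMap.Homotopic ⟨f, f.continuous⟩ (ContinuousMap.id T2))
    (ρ : ℝ) (hρ : Irrational ρ) (h : T2 → S1)
    (hcont : Continuous h) (hsurj : Function.Surjective h)
    (hsc : ∀ x, h (f x) = h x + ((ρ : ℝ) : S1))
    (H : A2 → ℝ) (hHc : Continuous H)
    (hHlift : ∀ z : A2, ((H z : ℝ) : S1) = h (pV z))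
    (hHtop : Filter.Tendsto H (Filter.comap Prod.snd Filter.atTop) Filter.atTop)
    (hHbot : Filter.Tendsto H (Filter.comap Prod.snd Filter.atBot) Filter.atBot)
    (hfib : ∀ ξ : ℝ, IsEAC (H ⁻¹' {ξ}))
    (ξ : ℝ) (hξΩ : interior (H ⁻¹' {ξ}) = ∅) :
    tauA (frontier (Uminus (H ⁻¹' {ξ}))) ≤
      Filter.liminf (fun ξ' : ℝ => tauA (frontier (Uminus (H ⁻¹' {ξ'}))))
        (nhdsWithin ξ (Set.Iio ξ)) ∧
    tauA (frontier (Uplus (H ⁻¹' {ξ}))) ≤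
      Filter.liminf (fun ξ' : ℝ => tauA (frontier (Uplus (H ⁻¹' {ξ'}))))
        (nhdsWithin ξ (Set.Ioi ξ)) := by
  have hprop := hprop_of_tendsto hHtop hHbot
  have hum : ∀ ζ : ℝ, Uminus (H ⁻¹' {ζ}) = {z : A2 | H z < ζ} :=
    fun ζ => (uminus_uplus_eq hHc hHtop hHbot (hfib ζ)).1
  have hup : ∀ ζ : ℝ, Uplus (H ⁻¹' {ζ}) = {z : A2 | ζ < H z} :=
    fun ζ => (uminus_uplus_eq hHc hHtop hHbot (hfib ζ)).2
  constructor
  · have h1 : (fun ξ' : ℝ => tauA (frontier (Uminus (H ⁻¹' {ξ'})))) =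
        (fun ξ' : ℝ => tauA (frontier {z : A2 | H z < ξ'})) :=
      funext fun ζ => by rw [hum ζ]
    rw [h1, hum ξ]
    exact tau_master H hHc hprop ξ
  · set H' : A2 → ℝ := fun z => -(H z) with hH'def
    have hH'c : Continuous H' := hHc.neg
    have hH'prop : ∀ a b : ℝ, ∃ m M : ℝ, ∀ z : A2, a ≤ H' z → H' z ≤ b →
        m ≤ z.2 ∧ z.2 ≤ M := by
      intro a b
      obtain ⟨m, M, hmM⟩ := hprop (-b) (-a)
      refine ⟨m, M, fun z h1 h2 => hmM z ?_ ?_⟩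
      · simp only [hH'def] at h2; linarith
      · simp only [hH'def] at h1; linarith
    have hset : ∀ ζ : ℝ, {z : A2 | ζ < H z} = {z : A2 | H' z < -ζ} := by
      intro ζ
      ext z
      simp only [hH'def, Set.mem_setOf_eq, neg_lt_neg_iff]
    have h2int : (fun ξ' : ℝ => tauA (frontier (Uplus (H ⁻¹' {ξ'})))) =
        (fun ξ' : ℝ => tauA (frontier {z : A2 | H' z < -ξ'})) :=
      funext fun ζ => by rw [hup ζ, hset ζ]
    rw [h2int, hup ξ, hset ξ]
    calc tauA (frontier {z : A2 | H' z < -ξ})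
        ≤ Filter.liminf (fun η : ℝ => tauA (frontier {z : A2 | H' z < η}))
            (nhdsWithin (-ξ) (Set.Iio (-ξ))) := tau_master H' hH'c hH'prop (-ξ)
      _ = Filter.liminf (fun η : ℝ => tauA (frontier {z : A2 | H' z < η}))
            (Filter.map (fun x : ℝ => -x) (nhdsWithin ξ (Set.Ioi ξ))) := by
          rw [map_neg_nhdsWithin_Ioi]
      _ = Filter.liminf (fun ξ' : ℝ => tauA (frontier {z : A2 | H' z < -ξ'}))
            (nhdsWithin ξ (Set.Ioi ξ)) := liminf_comp_map _ _ _
end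
end
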